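/- arXiv:2212.05365 — 5 statements merged into one kernel-verified Lean document; each statement's English description precedes it below -/
import Mathlib

section
/- Let k ≥ 3 be an integer, let K be an algebraically closed field whose characteristic does not divide k, and let G = (V,E) be a finite simple graph with chromatic number exactly k+1 and girth g satisfying g > 4k. Then for every natural number d with d + k − 1 < g/(4k) (equivalently, 4k(d + k − 1) < g), Bayer's k-coloring system for G has no Nullstellensatz certificate of degree at most d. -/
open MvPolynomial

/-- The edge polynomial `q_{uv} = Σ_{r=0}^{k-1} x_u^{k-1-r} x_v^r` of Bayer's
`k`-coloring system, as a function on unordered pairs. -/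
noncomputable def bayerQ (K : Type*) [CommRing K] {V : Type*} (k : ℕ) :
    Sym2 V → MvPolynomial V K :=
  Sym2.lift ⟨fun u v => ∑ r ∈ Finset.range k, X u ^ (k - 1 - r) * X v ^ r, by
    intro u v
    show (∑ r ∈ Finset.range k, (X u : MvPolynomial V K) ^ (k - 1 - r) * X v ^ r)
        = ∑ r ∈ Finset.range k, X v ^ (k - 1 - r) * X u ^ r
    conv_rhs => rw [← Finset.sum_range_reflect]
    refine Finset.sum_congr rfl fun r hr => ?_
    rw [Finset.mem_range] at hr
    have h : k - 1 - (k - 1 - r) = r := by omega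
    rw [h]
    ring⟩

/-- Bayer's `k`-coloring system for the graph `G` has a Nullstellensatz certificate of
degree at most `d`: polynomials `r_u` (for vertices) and `s_e` (for edges), all of total
degree at most `d`, with `Σ_u r_u (x_u^k - 1) + Σ_{{u,v} ∈ E} s_{uv} q_{uv} = 1`. -/
def HasNullCert (K : Type*) [CommRing K] {V : Type*} [Fintype V] [DecidableEq V]
    (G : SimpleGraph V) [DecidableRel G.Adj] (k d : ℕ) : Prop :=
  ∃ (r : V → MvPolynomial V K) (s : Sym2 V → MvPolynomial V K),
    (∀ u, (r u).totalDegree ≤ d) ∧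
    (∀ e ∈ G.edgeFinset, (s e).totalDegree ≤ d) ∧
    (∑ u, r u * (X u ^ k - 1)) + ∑ e ∈ G.edgeFinset, s e * bayerQ K k e = 1

/-!
Fix a proper colouring of `G` with colours `0, …, k` and orient every edge towards its endpoint
of larger colour. For `j : V → ZMod k` let `Φ j` be the signed count `∑ (-1)^|A|` of the forests
`A ⊆ E` whose boundary (heads minus tails, mod `k`) is `j`. The linear functional
`x^a ↦ Φ (a mod k)` kills every `r_u (x_u^k - 1)` and sends `1` to `Φ 0 = 1`. It also kills
`s_{uv} q_{uv}` when `deg s_{uv} ≤ d`: modulo `k`, the exponents of the `k` terms of `x^a q_{uv}`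
are `c + ρ (e_v - e_u)` with `ρ` running over `ZMod k`, and toggling the edge `uv` is a
sign-reversing involution on the forests with these boundaries. Adding `uv` to such a forest cannot close a cycle because the
girth is large: a forest whose boundary is supported on `S` has at most `2k|S|` edges, since the
colours increase strictly along a path through vertices of degree two and boundary zero. This bound comes from
a potential that drops whenever a leaf edge is removed.
-/

open Finset

namespace NullstellensatzColoring

section Monomials

variable {V K : Type*} [CommRing K]

lemma card_support_le_totalDegree {p : MvPolynomial V K} {a : V →₀ ℕ} (ha : a ∈ p.support) :
    #a.support ≤ p.totalDegree :=
  calc #a.support = ∑ _ ∈ a.support, 1 := card_eq_sum_ones _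
    _ ≤ a.sum fun _ e => e :=
      sum_le_sum fun _ hi => Nat.one_le_iff_ne_zero.2 (Finsupp.mem_support_iff.1 hi)
    _ ≤ p.totalDegree := le_totalDegree ha

lemma map_mul_eq_zero_of_monomial (L : MvPolynomial V K →ₗ[K] K) {p q : MvPolynomial V K}
    (h : ∀ a ∈ p.support, L (monomial a (p.coeff a) * q) = 0) : L (p * q) = 0 := by
  rw [p.as_sum, sum_mul, map_sum]
  exact sum_eq_zero h

end Monomials

theorem sum_neg_one_pow_card_eq_zero_of_toggle {α R : Type*} [DecidableEq α] [CommRing R]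
    {𝒜 : Finset (Finset α)} (a : α)
    (h𝒜 : ∀ A ∈ 𝒜, (if a ∈ A then A.erase a else insert a A) ∈ 𝒜) :
    ∑ A ∈ 𝒜, (-1 : R) ^ #A = 0 := by
  refine sum_involution (fun A _ => if a ∈ A then A.erase a else insert a A) (fun A _ => ?_)
    (fun A _ _ => ?_) h𝒜 (fun A _ => ?_)
  · split_ifs with ha
    · rw [← card_erase_add_one ha, pow_succ]; ring
    · rw [card_insert_of_notMem ha, pow_succ]; ring
  · split_ifs with ha
    · exact fun h => notMem_erase a A (by rwa [h])
    · exact fun h => ha (h ▸ mem_insert_self a A)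
  · by_cases ha : a ∈ A <;> simp [ha]

lemma sum_lt_sum_of_pair {V M : Type*} [Fintype V] [DecidableEq V] [AddCommMonoid M]
    [PartialOrder M] [IsOrderedCancelAddMonoid M] {f g : V → M} {w t : V} (hwt : w ≠ t)
    (hfg : ∀ v, v ≠ w → v ≠ t → f v = g v) (hlt : f w + f t < g w + g t) :
    ∑ v, f v < ∑ v, g v := by
  have ht : t ∈ univ.erase w := mem_erase.2 ⟨hwt.symm, mem_univ t⟩
  have hsplit (h : V → M) : ∑ v, h v = h w + h t + ∑ v ∈ (univ.erase w).erase t, h v := by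
    rw [← add_sum_erase _ _ (mem_univ w), ← add_sum_erase _ _ ht, add_assoc]
  rw [hsplit f, hsplit g, sum_congr rfl fun v hv =>
    hfg v (ne_of_mem_erase (mem_of_mem_erase hv)) (ne_of_mem_erase hv)]
  exact add_lt_add_left hlt _

section ZMod

variable {k : ℕ}

lemma sum_range_natCast_eq_sum {M : Type*} [AddCommMonoid M] [NeZero k] (f : ZMod k → M) :
    ∑ r ∈ range k, f r = ∑ ρ, f ρ :=
  sum_nbij' (↑) ZMod.val (fun _ _ => mem_univ _) (fun ρ _ => mem_range.2 (ZMod.val_lt ρ))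
    (fun _ hr => ZMod.val_natCast_of_lt (mem_range.1 hr)) (fun ρ _ => ZMod.natCast_zmod_val ρ)
    (fun _ _ => rfl)

lemma one_ne_zero_of_three_le (hk : 3 ≤ k) : (1 : ZMod k) ≠ 0 := by
  have : Fact (1 < k) := ⟨by omega⟩
  exact one_ne_zero

lemma neg_one_ne_one_of_three_le (hk : 3 ≤ k) : (-1 : ZMod k) ≠ 1 := by
  have : Fact (2 < k) := ⟨by omega⟩
  exact ZMod.neg_one_ne_one

end ZMod

variable {V : Type*} [DecidableEq V]

def edgeDeg (A : Finset (Sym2 V)) (v : V) : ℕ := #{e ∈ A | v ∈ e}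

-- A forest, in the form the argument uses: every nonempty set of its edges has a leaf.
def IsForest (A : Finset (Sym2 V)) : Prop := ∀ B ⊆ A, B.Nonempty → ∃ v, edgeDeg B v = 1

lemma IsForest.mono {A B : Finset (Sym2 V)} (hA : IsForest A) (hBA : B ⊆ A) : IsForest B :=
  fun C hC => hA C (hC.trans hBA)

lemma exists_mem_of_edgeDeg_pos {A : Finset (Sym2 V)} {v : V} (h : 0 < edgeDeg A v) :
    ∃ e ∈ A, v ∈ e := by
  obtain ⟨e, he⟩ := card_pos.1 h
  exact ⟨e, (mem_filter.1 he).1, (mem_filter.1 he).2⟩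

lemma exists_mem_ne_of_one_lt_edgeDeg {A : Finset (Sym2 V)} {v : V} (h : 1 < edgeDeg A v)
    (e : Sym2 V) : ∃ f ∈ A, v ∈ f ∧ f ≠ e := by
  obtain ⟨f, hf, hfe⟩ := exists_mem_ne h e
  exact ⟨f, (mem_filter.1 hf).1, (mem_filter.1 hf).2, hfe⟩

lemma edgeDeg_erase_of_mem {A : Finset (Sym2 V)} {e : Sym2 V} {v : V} (he : e ∈ A)
    (hv : v ∈ e) : edgeDeg (A.erase e) v = edgeDeg A v - 1 := by
  rw [edgeDeg, edgeDeg, filter_erase, card_erase_of_mem (mem_filter.2 ⟨he, hv⟩)]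

lemma edgeDeg_erase_of_notMem {A : Finset (Sym2 V)} {e : Sym2 V} {v : V} (hv : v ∉ e) :
    edgeDeg (A.erase e) v = edgeDeg A v := by
  rw [edgeDeg, edgeDeg, filter_erase, erase_eq_of_notMem]
  exact fun h => hv (mem_filter.1 h).2

section Cycles

variable [Fintype V] {G : SimpleGraph V} [DecidableRel G.Adj]

-- Prolong the path at its start along a second edge of `B`; since paths are shorter than
-- `card V`, eventually the new edge returns to the path and closes a cycle.
theorem exists_isCycle_of_forall_edgeDeg_ne_one {B : Finset (Sym2 V)} (hBE : B ⊆ G.edgeFinset)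
    (hB : ∀ v, edgeDeg B v ≠ 1) {x y : V} (p : G.Walk y x) (hp : p.IsPath) (hp0 : ¬ p.Nil)
    (hpB : ∀ e ∈ p.edges, e ∈ B) :
    ∃ (a : V) (c : G.Walk a a), c.IsCycle ∧ ∀ e ∈ c.edges, e ∈ B := by
  have hfirst : s(y, p.snd) ∈ B := hpB _ (p.mk_start_snd_mem_edges hp0)
  have hdeg : 1 < edgeDeg B y :=
    lt_of_le_of_ne (card_pos.2 ⟨_, mem_filter.2 ⟨hfirst, Sym2.mem_mk_left _ _⟩⟩) (hB y).symm
  obtain ⟨f, hfB, hyf, hf⟩ := exists_mem_ne_of_one_lt_edgeDeg hdeg s(y, p.snd)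
  obtain ⟨z, rfl⟩ : ∃ z, f = s(y, z) := ⟨Sym2.Mem.other hyf, (Sym2.other_spec hyf).symm⟩
  have hyz : G.Adj y z := by simpa using hBE hfB
  by_cases hz : z ∈ p.support
  · refine ⟨y, .cons hyz (p.takeUntil z hz).reverse, ?_, ?_⟩
    · refine (SimpleGraph.Walk.cons_isCycle_iff _ _).2 ⟨(hp.takeUntil hz).reverse, fun hmem => ?_⟩
      rw [SimpleGraph.Walk.edges_reverse, List.mem_reverse] at hmem
      exact hf (by rw [hp.eq_snd_of_mem_edges (p.edges_takeUntil_subset_edges hz hmem)])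
    · intro e he
      rw [SimpleGraph.Walk.edges_cons, SimpleGraph.Walk.edges_reverse, List.mem_cons,
        List.mem_reverse] at he
      rcases he with rfl | he
      · exact hfB
      · exact hpB e (p.edges_takeUntil_subset_edges hz he)
  · have hp' : (p.cons hyz.symm).IsPath := (SimpleGraph.Walk.cons_isPath_iff _ _).2 ⟨hp, hz⟩
    have hlen := hp'.length_lt
    refine exists_isCycle_of_forall_edgeDeg_ne_one hBE hB _ hp' SimpleGraph.Walk.not_nil_cons
      fun e he => ?_
    rw [SimpleGraph.Walk.edges_cons, List.mem_cons] at he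
    rcases he with rfl | he
    · rwa [Sym2.eq_swap]
    · exact hpB e he
termination_by Fintype.card V - p.length
decreasing_by rw [SimpleGraph.Walk.length_cons] at hlen ⊢; omega

theorem isForest_of_card_lt_egirth {A : Finset (Sym2 V)} (hAE : A ⊆ G.edgeFinset)
    (hA : (#A : ℕ∞) < G.egirth) : IsForest A := by
  intro B hBA ⟨e, he⟩
  by_contra! hB
  induction e using Sym2.inductionOn with
  | hf x y =>
    have hxy : G.Adj x y := by simpa using hAE (hBA he)
    obtain ⟨a, c, hc, hcB⟩ := exists_isCycle_of_forall_edgeDeg_ne_one (hBA.trans hAE) hB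
      hxy.toWalk (by simpa using hxy.ne) (by simp) (by simpa using he)
    have hcA : c.length ≤ #A := calc
      c.length = #c.edges.toFinset := by
        rw [List.toFinset_card_of_nodup hc.edges_nodup, SimpleGraph.Walk.length_edges]
      _ ≤ #A := card_le_card fun e he => hBA (hcB e (List.mem_toFinset.1 he))
    exact (SimpleGraph.egirth_le_length hc).not_gt (hA.trans_le' (by exact_mod_cast hcA))

end Cycles

variable {k : ℕ}

def dipole (k : ℕ) (x y : V) : V → ZMod k := Pi.single y 1 - Pi.single x 1

lemma dipole_apply_right {x y : V} (hxy : x ≠ y) : dipole k x y y = 1 := by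
  simp [dipole, hxy.symm]

lemma dipole_apply_of_ne {x y w : V} (hx : w ≠ x) (hy : w ≠ y) : dipole k x y w = 0 := by
  simp [dipole, hx, hy]

def orient (γ : V → Fin (k + 1)) : Sym2 V → V → ZMod k :=
  Sym2.lift ⟨fun x y => if γ x < γ y then dipole k x y else if γ y < γ x then dipole k y x else 0,
    fun x y => by rcases lt_trichotomy (γ x) (γ y) with h | h | h <;> simp [h, h.not_gt]⟩

def boundary (γ : V → Fin (k + 1)) (A : Finset (Sym2 V)) : V → ZMod k := ∑ e ∈ A, orient γ e

variable {γ : V → Fin (k + 1)}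

lemma orient_mk_of_lt {x y : V} (h : γ x < γ y) : orient γ s(x, y) = dipole k x y := by
  simp [orient, h]

lemma orient_apply_of_notMem {e : Sym2 V} {v : V} (hv : v ∉ e) : orient γ e v = 0 := by
  induction e using Sym2.inductionOn with
  | hf x y =>
    have hx : v ≠ x := fun h => hv (h ▸ Sym2.mem_mk_left x y)
    have hy : v ≠ y := fun h => hv (h ▸ Sym2.mem_mk_right x y)
    simp only [orient, Sym2.lift_mk]
    split_ifs <;> simp [dipole, hx, hy]

lemma orient_mk_eq_smul_dipole {x y : V} (h : γ x ≠ γ y) :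
    ∃ σ : ZMod k, orient γ s(x, y) = σ • dipole k x y := by
  rcases h.lt_or_gt with h | h
  · exact ⟨1, by rw [orient_mk_of_lt h, one_smul]⟩
  · refine ⟨-1, ?_⟩
    rw [Sym2.eq_swap, orient_mk_of_lt h, dipole, dipole, neg_one_smul, neg_sub]

lemma orient_mk_apply_left {x y : V} (h : γ x ≠ γ y) :
    orient γ s(x, y) x = 1 ∧ γ y < γ x ∨ orient γ s(x, y) x = -1 ∧ γ x < γ y := by
  have hxy : x ≠ y := fun hxy => h (hxy ▸ rfl)
  rcases h.lt_or_gt with h | h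
  · right
    simp [orient_mk_of_lt h, dipole, h, hxy]
  · left
    rw [Sym2.eq_swap, orient_mk_of_lt h]
    simp [dipole, h, hxy]

lemma orient_mk_apply_right {x y : V} (hxy : x ≠ y) :
    orient γ s(x, y) y = -orient γ s(x, y) x := by
  rcases lt_trichotomy (γ x) (γ y) with h | h | h
  · simp [orient_mk_of_lt h, dipole, hxy, hxy.symm]
  · simp [orient, h]
  · simp [Sym2.eq_swap (a := x), orient_mk_of_lt h, dipole, hxy, hxy.symm]

lemma boundary_apply (A : Finset (Sym2 V)) (v : V) :
    boundary γ A v = ∑ e ∈ A, orient γ e v := sum_apply v A _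

lemma boundary_erase {A : Finset (Sym2 V)} {e : Sym2 V} (he : e ∈ A) :
    boundary γ (A.erase e) = boundary γ A - orient γ e := by
  rw [boundary, boundary, ← sum_erase_add _ _ he, add_sub_cancel_right]

lemma boundary_insert {A : Finset (Sym2 V)} {e : Sym2 V} (he : e ∉ A) :
    boundary γ (insert e A) = boundary γ A + orient γ e := by
  rw [boundary, boundary, sum_insert he, add_comm]

lemma boundary_apply_of_edgeDeg_eq_one {A : Finset (Sym2 V)} {e : Sym2 V} {v : V}
    (hv : edgeDeg A v = 1) (he : e ∈ A) (hve : v ∈ e) : boundary γ A v = orient γ e v := by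
  have hfilter : {f ∈ A | v ∈ f} = {e} :=
    eq_singleton_iff_unique_mem.2 ⟨mem_filter.2 ⟨he, hve⟩, fun f hf =>
      card_le_one.1 hv.le f hf e (mem_filter.2 ⟨he, hve⟩)⟩
  rw [boundary_apply, ← sum_filter_add_sum_filter_not A (v ∈ ·), hfilter, sum_singleton,
    sum_eq_zero fun f hf => orient_apply_of_notMem (mem_filter.1 hf).2, add_zero]

-- A leaf that is the head (`b = 1`) or the tail (`b = -1`) of its edge weighs `k + c` or
-- `2k - c`, so its weight drops as it moves along a colour-monotone path of uncharged
-- vertices; charged non-leaves weigh `k`.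
def weight (k δ : ℕ) (b : ZMod k) (c : ℕ) : ℕ :=
  if b = 0 then 0 else if δ = 1 then (if b = 1 then k + c else 2 * k - c) else k

lemma weight_le {δ c : ℕ} (b : ZMod k) (hc : c ≤ k) : weight k δ b c ≤ 2 * k := by
  unfold weight; split_ifs <;> omega

lemma weight_le_of_ne_one {δ c : ℕ} (b : ZMod k) (hδ : δ ≠ 1) : weight k δ b c ≤ k := by
  unfold weight; split_ifs <;> omega

lemma weight_zero {δ c : ℕ} : weight k δ 0 c = 0 := if_pos rfl

-- Deleting the edge `wt` at a leaf `w` of colour `c'` and boundary `σ`, where `t` has colour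
-- `c`, degree `δ` and boundary `b`.
lemma weight_erase_leaf_lt (hk : 3 ≤ k) {δ c c' : ℕ} {b σ : ZMod k} (hc : c ≤ k)
    (hσ : σ = 1 ∧ c < c' ∨ σ = -1 ∧ c' < c) :
    weight k (δ - 1) (b + σ) c < weight k δ b c + weight k 1 σ c' := by
  have h1 := one_ne_zero_of_three_le hk
  have h2 := neg_one_ne_one_of_three_le hk
  have hleaf : weight k 1 σ c < weight k 1 σ c' ∧ k ≤ weight k 1 σ c := by
    rcases hσ with ⟨rfl, h⟩ | ⟨rfl, h⟩
    · simp only [weight, if_neg h1, if_true]; omega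
    · simp only [weight, neg_eq_zero, if_neg h1, if_neg h2, if_true]; omega
  obtain rfl | hδ := eq_or_ne δ 2
  · rw [show 2 - 1 = 1 from rfl]
    by_cases hb : b = 0
    · rw [hb, zero_add, weight_zero]; omega
    · have h2k := weight_le (δ := 1) (b + σ) hc
      have hweight : weight k 2 b c = k := by simp [weight, hb]
      omega
  · have := weight_le_of_ne_one (c := c) (b + σ) (show δ - 1 ≠ 1 by omega)
    omega

variable [Fintype V]

def potential (γ : V → Fin (k + 1)) (A : Finset (Sym2 V)) : ℕ :=
  ∑ v, weight k (edgeDeg A v) (boundary γ A v) (γ v)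

lemma potential_le (A : Finset (Sym2 V)) :
    potential γ A ≤ 2 * k * #{v | boundary γ A v ≠ 0} := by
  rw [card_eq_sum_ones, mul_sum, sum_filter, potential]
  refine sum_le_sum fun v _ => ?_
  split_ifs with hv
  · simpa using weight_le _ (Fin.is_le (γ v))
  · rw [not_not.1 hv, weight_zero]

variable {G : SimpleGraph V} [DecidableRel G.Adj]

lemma potential_erase_lt (hk : 3 ≤ k) (C : G.Coloring (Fin (k + 1))) {A : Finset (Sym2 V)}
    (hAE : A ⊆ G.edgeFinset) {e : Sym2 V} (he : e ∈ A) {w : V} (hwe : w ∈ e)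
    (hw : edgeDeg A w = 1) : potential C (A.erase e) < potential C A := by
  obtain ⟨t, rfl⟩ : ∃ t, e = s(w, t) := ⟨Sym2.Mem.other hwe, (Sym2.other_spec hwe).symm⟩
  have hadj : G.Adj w t := by simpa using hAE he
  have hbw : boundary C A w = orient C s(w, t) w := boundary_apply_of_edgeDeg_eq_one hw he hwe
  refine sum_lt_sum_of_pair hadj.ne (fun v hvw hvt => ?_) ?_
  · have hv : v ∉ s(w, t) := by simp [hvw, hvt]
    rw [edgeDeg_erase_of_notMem hv, boundary_erase he, Pi.sub_apply,
      orient_apply_of_notMem hv, sub_zero]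
  · have hw' : boundary C (A.erase s(w, t)) w = 0 := by
      rw [boundary_erase he, Pi.sub_apply, hbw, sub_self]
    rw [hw', weight_zero, zero_add, hw, hbw, boundary_erase he, Pi.sub_apply,
      orient_mk_apply_right hadj.ne, sub_neg_eq_add,
      edgeDeg_erase_of_mem he (Sym2.mem_mk_right w t), add_comm (weight k 1 _ _)]
    exact weight_erase_leaf_lt hk (Fin.is_le _) (orient_mk_apply_left (C.valid hadj))

lemma card_le_potential (hk : 3 ≤ k) (C : G.Coloring (Fin (k + 1))) {A : Finset (Sym2 V)}
    (hAE : A ⊆ G.edgeFinset) (hA : IsForest A) : #A ≤ potential C A := by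
  induction A using Finset.strongInduction with
  | H A ih =>
    obtain rfl | hne := A.eq_empty_or_nonempty
    · exact Nat.zero_le _
    obtain ⟨w, hw⟩ := hA A subset_rfl hne
    obtain ⟨e, he, hwe⟩ := exists_mem_of_edgeDeg_pos (hw ▸ Nat.one_pos)
    have hlt := potential_erase_lt hk C hAE he hwe hw
    have := ih _ (erase_ssubset he) ((erase_subset e A).trans hAE) (hA.mono (erase_subset e A))
    rw [card_erase_of_mem he] at this
    have := card_pos.2 hne
    omega

lemma card_le_of_isForest (hk : 3 ≤ k) (C : G.Coloring (Fin (k + 1))) {A : Finset (Sym2 V)}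
    (hAE : A ⊆ G.edgeFinset) (hA : IsForest A) :
    #A ≤ 2 * k * #{v | boundary C A v ≠ 0} :=
  (card_le_potential hk C hAE hA).trans (potential_le A)

lemma card_le_of_boundary_eq_add_smul_dipole (hk : 3 ≤ k) (C : G.Coloring (Fin (k + 1)))
    {A : Finset (Sym2 V)} (hAE : A ⊆ G.edgeFinset) (hA : IsForest A) {u v : V}
    {c : V → ZMod k} {ρ : ZMod k} (hbd : boundary C A = c + ρ • dipole k u v) {S : Finset V}
    (hcS : ∀ w ∉ S, c w = 0) (hu : u ∈ S) (hv : v ∈ S) : #A ≤ 2 * k * #S := by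
  refine (card_le_of_isForest hk C hAE hA).trans (Nat.mul_le_mul_left _ (card_le_card ?_))
  intro w hw
  by_contra hwS
  have hwu : w ≠ u := fun h => hwS (h ▸ hu)
  have hwv : w ≠ v := fun h => hwS (h ▸ hv)
  simp [hbd, hcS w hwS, dipole_apply_of_ne hwu hwv] at hw

open Classical in
noncomputable def forestSum (K : Type*) [CommRing K] (G : SimpleGraph V) [DecidableRel G.Adj]
    (γ : V → Fin (k + 1)) (j : V → ZMod k) : K :=
  ∑ A ∈ G.edgeFinset.powerset with IsForest A ∧ boundary γ A = j, (-1) ^ #A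

variable {K : Type*} [CommRing K]

theorem forestSum_zero (hk : 3 ≤ k) (C : G.Coloring (Fin (k + 1))) :
    forestSum K G C 0 = 1 := by
  classical
  rw [forestSum, sum_eq_single_of_mem ∅ ?_ fun A hA hA0 => ?_, card_empty, pow_zero]
  · refine mem_filter.2 ⟨empty_mem_powerset _, fun B hB hBne => ?_, rfl⟩
    simp [subset_empty.1 hB] at hBne
  · obtain ⟨hAE, hA, hbd⟩ := by simpa only [mem_filter, mem_powerset] using hA
    have := card_le_of_isForest hk C hAE hA
    simp [hbd, hA0] at this

-- Toggling the edge `uv` pairs off the forests with boundary in `c + ZMod k • dipole u v`;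
-- the girth bound keeps a forest a forest when `uv` is added.
theorem sum_forestSum_add_smul_dipole_eq_zero (hk : 3 ≤ k) [NeZero k]
    (C : G.Coloring (Fin (k + 1))) {u v : V} (huv : G.Adj u v) {c : V → ZMod k}
    {S : Finset V} (hcS : ∀ w ∉ S, c w = 0) (hu : u ∈ S) (hv : v ∈ S)
    (hS : ((2 * k * #S + 1 : ℕ) : ℕ∞) < G.egirth) :
    ∑ ρ : ZMod k, forestSum K G C (c + ρ • dipole k u v) = 0 := by
  classical
  have hdisj : Set.PairwiseDisjoint (↑(univ : Finset (ZMod k)) : Set (ZMod k)) fun ρ =>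
      {A ∈ G.edgeFinset.powerset | IsForest A ∧ boundary C A = c + ρ • dipole k u v} := by
    refine fun ρ₁ _ ρ₂ _ hρ => disjoint_left.2 fun A h₁ h₂ => hρ ?_
    have := congrFun ((mem_filter.1 h₁).2.2.symm.trans (mem_filter.1 h₂).2.2) v
    simpa [dipole_apply_right huv.ne] using this
  simp only [forestSum]
  rw [← sum_biUnion hdisj]
  refine sum_neg_one_pow_card_eq_zero_of_toggle s(u, v) fun A hA => ?_
  simp only [mem_biUnion, mem_univ, true_and, mem_filter, mem_powerset] at hA ⊢
  obtain ⟨ρ, hAE, hA, hbd⟩ := hA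
  have huvE : s(u, v) ∈ G.edgeFinset := by simpa using huv
  obtain ⟨σ, hσ⟩ := orient_mk_eq_smul_dipole (C.valid huv)
  split_ifs with he
  · refine ⟨ρ - σ, (erase_subset _ _).trans hAE, hA.mono (erase_subset _ _), ?_⟩
    rw [boundary_erase he, hbd, hσ, sub_smul, add_sub_assoc]
  · have hcard := card_le_of_boundary_eq_add_smul_dipole hk C hAE hA hbd hcS hu hv
    refine ⟨ρ + σ, insert_subset huvE hAE, isForest_of_card_lt_egirth (insert_subset huvE hAE)
      (lt_of_le_of_lt ?_ hS), ?_⟩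
    · exact_mod_cast (card_insert_le _ _).trans (Nat.add_le_add_right hcard 1)
    · rw [boundary_insert he, hbd, hσ, add_smul, add_assoc]

noncomputable def forestFunctional (K : Type*) [CommRing K] (G : SimpleGraph V)
    [DecidableRel G.Adj] (γ : V → Fin (k + 1)) : MvPolynomial V K →ₗ[K] K :=
  (basisMonomials V K).constr K fun a => forestSum K G γ fun w => (a w : ZMod k)

lemma forestFunctional_monomial (a : V →₀ ℕ) (c : K) :
    forestFunctional K G γ (monomial a c) = c * forestSum K G γ fun w => (a w : ZMod k) := by
  have : monomial a c = c • basisMonomials V K a := by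
    rw [coe_basisMonomials, smul_monomial, smul_eq_mul, mul_one]
  rw [this, map_smul, forestFunctional, Module.Basis.constr_basis, smul_eq_mul]

lemma forestFunctional_one (hk : 3 ≤ k) (C : G.Coloring (Fin (k + 1))) :
    forestFunctional K G C 1 = 1 := by
  rw [MvPolynomial.one_def, forestFunctional_monomial, one_mul, ← forestSum_zero (K := K) hk C]
  congr with w
  simp

lemma forestFunctional_mul_X_pow_sub_one (r : MvPolynomial V K) (u : V) :
    forestFunctional K G γ (r * (X u ^ k - 1)) = 0 := by
  refine map_mul_eq_zero_of_monomial _ fun a _ => ?_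
  rw [mul_sub, mul_one, X_pow_eq_monomial, monomial_mul, mul_one, map_sub,
    forestFunctional_monomial, forestFunctional_monomial, sub_eq_zero]
  congr with w
  rw [Finsupp.add_apply, Nat.cast_add, Finsupp.single_apply]
  split_ifs <;> simp

lemma forestFunctional_mul_bayerQ (hk : 3 ≤ k) [NeZero k] (C : G.Coloring (Fin (k + 1)))
    {u v : V} (huv : G.Adj u v) {s : MvPolynomial V K} {d : ℕ} (hs : s.totalDegree ≤ d)
    (hg : ((2 * k * (d + 2) + 1 : ℕ) : ℕ∞) < G.egirth) :
    forestFunctional K G C (s * bayerQ K k s(u, v)) = 0 := by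
  refine map_mul_eq_zero_of_monomial _ fun a ha => ?_
  have hq : bayerQ K k s(u, v) =
      ∑ r ∈ range k, monomial (Finsupp.single u (k - 1 - r) + Finsupp.single v r) 1 := by
    simp only [bayerQ, Sym2.lift_mk, X_pow_eq_monomial, monomial_mul, mul_one]
  set c : V → ZMod k := (fun w => (a w : ZMod k)) - Pi.single u 1
  -- `k - 1 - r ≡ -1 - r (mod k)`
  have hterm : ∀ r ∈ range k, (fun w => ((a + (Finsupp.single u (k - 1 - r) +
      Finsupp.single v r)) w : ZMod k)) = c + (r : ZMod k) • dipole k u v := by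
    intro r hr
    have hcast : ((k - 1 - r : ℕ) : ZMod k) = -1 - r := by
      rw [Nat.cast_sub (by simp at hr; omega), Nat.cast_sub (by omega), ZMod.natCast_self]
      ring
    funext w
    by_cases hwu : w = u
    · subst hwu
      simp [c, dipole, huv.ne, hcast]; ring
    · simp [c, dipole, hwu, Finsupp.single_apply, Pi.single_apply, eq_comm]
  set S := insert u (insert v a.support)
  have hcS : ∀ w ∉ S, c w = 0 := fun w hw => by
    simp only [S, mem_insert, Finsupp.mem_support_iff, not_or, not_not] at hw
    simp [c, hw.1, hw.2.2]
  have hS : #S ≤ d + 2 :=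
    (card_insert_le _ _).trans (Nat.add_le_add_right ((card_insert_le _ _).trans
      (Nat.add_le_add_right ((card_support_le_totalDegree ha).trans hs) 1)) 1)
  rw [hq, mul_sum, map_sum]
  simp_rw [monomial_mul, mul_one, forestFunctional_monomial, ← mul_sum]
  rw [sum_congr rfl fun r hr => by rw [hterm r hr],
    sum_range_natCast_eq_sum fun ρ => forestSum K G C (c + ρ • dipole k u v),
    sum_forestSum_add_smul_dipole_eq_zero hk C huv hcS (mem_insert_self _ _)
      (mem_insert_of_mem (mem_insert_self _ _)) (hg.trans_le' (by gcongr)), mul_zero]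

end NullstellensatzColoring

open NullstellensatzColoring

theorem no_nullstellensatz_certificate_of_large_girth_general
    {V : Type*} [Fintype V] [DecidableEq V]
    (K : Type*) [Field K]
    (k : ℕ) (hk : 3 ≤ k)
    (G : SimpleGraph V) [DecidableRel G.Adj]
    (hchrom : G.chromaticNumber = ((k + 1 : ℕ) : ℕ∞))
    (d : ℕ) (hd : ((4 * k * (d + k - 1) : ℕ) : ℕ∞) < G.egirth) :
    ¬ HasNullCert K G k d := by
  rintro ⟨r, s, -, hs, hcert⟩
  have : NeZero k := ⟨by omega⟩
  obtain ⟨C⟩ := SimpleGraph.chromaticNumber_le_iff_colorable.1 hchrom.le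
  have hg : ((2 * k * (d + 2) + 1 : ℕ) : ℕ∞) < G.egirth := by
    refine hd.trans_le' (Nat.cast_le.2 ?_)
    have : d + 2 ≤ d + k - 1 := by omega
    nlinarith
  have hedge : ∀ e ∈ G.edgeFinset, forestFunctional K G C (s e * bayerQ K k e) = 0 := by
    intro e he
    induction e using Sym2.inductionOn with
    | hf u v => exact forestFunctional_mul_bayerQ hk C (by simpa using he) (hs _ he) hg
  have h := congrArg (forestFunctional K G C) hcert
  rw [map_add, map_sum, map_sum, sum_eq_zero fun u _ => forestFunctional_mul_X_pow_sub_one _ u,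
    sum_eq_zero hedge, add_zero, forestFunctional_one hk C] at h
  exact zero_ne_one h

/-- **Theorem (main).** If `G` has chromatic number `k+1` (with `k ≥ 3`) and girth
`g > 4k`, and `K` is an algebraically closed field whose characteristic does not divide
`k`, then for every `d` with `4k(d + k - 1) < g`, Bayer's `k`-coloring system for `G`
has no Nullstellensatz certificate of degree at most `d`. -/
theorem no_nullstellensatz_certificate_of_large_girth
    {V : Type*} [Fintype V] [DecidableEq V]
    (K : Type*) [Field K] [IsAlgClosed K]
    (k : ℕ) (hk : 3 ≤ k) (hchar : ¬ (ringChar K ∣ k))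
    (G : SimpleGraph V) [DecidableRel G.Adj]
    (hchrom : G.chromaticNumber = ((k + 1 : ℕ) : ℕ∞))
    (hgirth : ((4 * k : ℕ) : ℕ∞) < G.egirth)
    (d : ℕ) (hd : ((4 * k * (d + k - 1) : ℕ) : ℕ∞) < G.egirth) :
    ¬ HasNullCert K G k d :=
  no_nullstellensatz_certificate_of_large_girth_general K k hk G hchrom d hd
end

section
/- Let k ≥ 2 be an integer, K a field, G = (V,E) a finite simple graph, and d a natural number. If there exists a dual Nullstellensatz certificate of degree d for G over K (a family λ_α ∈ K indexed by α : V → ZMod k with λ_0 = 1 and, for every α with |α| ≤ d and every edge {u,v} ∈ E, Σ_{r ∈ ZMod k} λ_{α + r·(e_u − e_v) − e_v} = 0), then Bayer's k-coloring system for G has no Nullstellensatz certificate of degree at most d. -/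
/-! A dual certificate `λ` defines a `K`-linear functional `L` on `K[x_v : v ∈ V]` by
`L(x^m) = λ_(m mod k)`. Since `L` only sees exponents modulo `k`, it kills every multiple of
`x_u^k - 1`, and the dual certificate equations say exactly that it kills `x^m q_uv` whenever
`|m mod k| ≤ d`, hence every multiple `s q_uv` with `deg s ≤ d`. Applied to a certificate of
degree `d`, `L` would give `0 = L 1 = λ_0 = 1`. -/

open MvPolynomial

/-- `lam` is a dual Nullstellensatz certificate of degree `d` for `G` and `k` colors. -/
def IsDualCert (K : Type*) [CommRing K] {V : Type*} [Fintype V] [DecidableEq V]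
    (G : SimpleGraph V) (k d : ℕ) (lam : (V → ZMod k) → K) : Prop :=
  lam 0 = 1 ∧
  ∀ α : V → ZMod k, (∑ v, (α v).val) ≤ d → ∀ u v : V, G.Adj u v →
    ∑ r ∈ Finset.range k,
      lam (α + (r : ZMod k) • (Pi.single u 1 - Pi.single v 1) - Pi.single v 1) = 0

section

variable {V K : Type*}

def exponentMod (k : ℕ) (m : V →₀ ℕ) : V → ZMod k := fun v => m v

section exponentMod

variable (k : ℕ)

@[simp]
lemma exponentMod_zero : exponentMod k (0 : V →₀ ℕ) = 0 := by
  ext; simp [exponentMod]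

@[simp]
lemma exponentMod_add (m n : V →₀ ℕ) :
    exponentMod k (m + n) = exponentMod k m + exponentMod k n := by
  ext; simp [exponentMod]

@[simp]
lemma exponentMod_single [DecidableEq V] (u : V) (j : ℕ) :
    exponentMod k (Finsupp.single u j) = (j : ZMod k) • Pi.single u 1 := by
  ext v; by_cases h : v = u <;> simp [exponentMod, h]

lemma sum_val_exponentMod_le [Fintype V] (m : V →₀ ℕ) :
    ∑ v, (exponentMod k m v).val ≤ m.sum fun _ e => e := by
  rw [Finsupp.sum_fintype _ _ fun _ => rfl]
  exact Finset.sum_le_sum fun v _ => (ZMod.val_natCast _ _).trans_le (Nat.mod_le _ _)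

end exponentMod

lemma ZMod.natCast_sub_one_sub {k r : ℕ} (hr : r < k) : ((k - 1 - r : ℕ) : ZMod k) = -1 - r := by
  rw [Nat.sub_sub, Nat.cast_sub (by omega), ZMod.natCast_self]; push_cast; ring

section dualFunctional

variable [CommRing K] (k : ℕ) (lam : (V → ZMod k) → K)

noncomputable def dualFunctional : MvPolynomial V K →ₗ[K] K :=
  (basisMonomials V K).constr K fun m => lam (exponentMod k m)

variable {k lam}

lemma dualFunctional_monomial (m : V →₀ ℕ) (c : K) :
    dualFunctional k lam (monomial m c) = c * lam (exponentMod k m) := by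
  simp [dualFunctional, Module.Basis.constr_apply, basisMonomials]

lemma dualFunctional_one : dualFunctional k lam (1 : MvPolynomial V K) = lam 0 := by
  simpa using dualFunctional_monomial (lam := lam) (0 : V →₀ ℕ) 1

lemma dualFunctional_mul_X_pow (p : MvPolynomial V K) (u : V) :
    dualFunctional k lam (p * X u ^ k) = dualFunctional k lam p := by
  classical
  suffices dualFunctional k lam ∘ₗ LinearMap.mulRight K (X u ^ k) = dualFunctional k lam from
    LinearMap.congr_fun this p
  refine linearMap_ext fun m => LinearMap.ext_ring ?_
  simp only [LinearMap.comp_apply, LinearMap.mulRight_apply]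
  rw [X_pow_eq_monomial, monomial_mul, dualFunctional_monomial, dualFunctional_monomial]
  simp

lemma dualFunctional_mul_X_pow_sub_one (p : MvPolynomial V K) (u : V) :
    dualFunctional k lam (p * (X u ^ k - 1)) = 0 := by
  rw [mul_sub, mul_one, map_sub, dualFunctional_mul_X_pow, sub_self]

end dualFunctional

section Bayer

variable [CommRing K] [Fintype V] [DecidableEq V] {G : SimpleGraph V} {k d : ℕ}
  {lam : (V → ZMod k) → K}

lemma dualFunctional_monomial_mul_bayerQ (hlam : IsDualCert K G k d lam) {m : V →₀ ℕ}
    (hm : ∑ v, (exponentMod k m v).val ≤ d) {u v : V} (huv : G.Adj u v) (c : K) :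
    dualFunctional k lam (monomial m c * bayerQ K k s(u, v)) = 0 := by
  have hexp : ∀ r < k,
      exponentMod k (m + Finsupp.single u (k - 1 - r) + Finsupp.single v r) =
        exponentMod k m + (r : ZMod k) • (Pi.single v 1 - Pi.single u 1) - Pi.single u 1 := by
    intro r hr
    simp only [exponentMod_add, exponentMod_single, ZMod.natCast_sub_one_sub hr]
    module
  calc dualFunctional k lam (monomial m c * bayerQ K k s(u, v))
      = ∑ r ∈ Finset.range k, c * lam (exponentMod k m +
          (r : ZMod k) • (Pi.single v 1 - Pi.single u 1) - Pi.single u 1) := by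
        rw [bayerQ, Sym2.lift_mk, Finset.mul_sum, map_sum]
        refine Finset.sum_congr rfl fun r hr => ?_
        rw [X_pow_eq_monomial, X_pow_eq_monomial, monomial_mul, monomial_mul, mul_one, mul_one,
          dualFunctional_monomial, ← add_assoc, hexp r (Finset.mem_range.1 hr)]
    _ = 0 := by rw [← Finset.mul_sum, hlam.2 _ hm v u huv.symm, mul_zero]

lemma dualFunctional_mul_bayerQ (hlam : IsDualCert K G k d lam) {p : MvPolynomial V K}
    (hp : p.totalDegree ≤ d) {e : Sym2 V} (he : e ∈ G.edgeSet) :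
    dualFunctional k lam (p * bayerQ K k e) = 0 := by
  induction e using Sym2.ind with | _ u v => ?_
  rw [p.as_sum, Finset.sum_mul, map_sum]
  refine Finset.sum_eq_zero fun m hm => dualFunctional_monomial_mul_bayerQ hlam ?_ he _
  exact (sum_val_exponentMod_le k m).trans ((le_totalDegree hm).trans hp)

end Bayer

end

theorem no_certificate_of_dual_certificate_general
    {V : Type*} [Fintype V] [DecidableEq V]
    (K : Type*) [Field K]
    (k : ℕ)
    (G : SimpleGraph V) [DecidableRel G.Adj] (d : ℕ)
    (lam : (V → ZMod k) → K) (hlam : IsDualCert K G k d lam) :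
    ¬ HasNullCert K G k d := by
  rintro ⟨r, s, -, hs, hcert⟩
  have h := congrArg (dualFunctional k lam) hcert
  rw [map_add, map_sum, map_sum,
    Finset.sum_eq_zero fun u _ => dualFunctional_mul_X_pow_sub_one (r u) u,
    Finset.sum_eq_zero fun e he => dualFunctional_mul_bayerQ hlam (hs e he) (G.mem_edgeFinset.1 he),
    dualFunctional_one, hlam.1, add_zero] at h
  exact zero_ne_one h

/-- If there exists a dual Nullstellensatz certificate of degree `d` for `G` over `K`,
then Bayer's `k`-coloring system for `G` has no Nullstellensatz certificate of degree
at most `d`. -/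
theorem no_certificate_of_dual_certificate
    {V : Type*} [Fintype V] [DecidableEq V]
    (K : Type*) [Field K]
    (k : ℕ) (hk : 2 ≤ k)
    (G : SimpleGraph V) [DecidableRel G.Adj] (d : ℕ)
    (lam : (V → ZMod k) → K) (hlam : IsDualCert K G k d lam) :
    ¬ HasNullCert K G k d :=
  no_certificate_of_dual_certificate_general K k G d lam hlam
end

section
/- Let k ≥ 2 be an integer, let K be an algebraically closed field whose characteristic does not divide k, and let G = (V,E) be a finite simple graph. Then G is k-colorable if and only if there exists an assignment a : V → K such that a_v^k = 1 for every vertex v ∈ V and Σ_{r=0}^{k−1} a_u^{k−1−r} a_v^r = 0 for every edge {u,v} ∈ E. -/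
/-- A finite simple graph `G` is `k`-colorable if and only if, over an algebraically
closed field `K` whose characteristic does not divide `k`, there is an assignment
`a : V → K` of `k`-th roots of unity to the vertices with
`Σ_{r=0}^{k-1} a_u^{k-1-r} a_v^r = 0` for every edge `{u,v}`. -/
theorem colorable_iff_bayer_solution
    {V : Type*} [Fintype V]
    (K : Type*) [Field K] [IsAlgClosed K]
    (k : ℕ) (hk : 2 ≤ k) (hchar : ¬ (ringChar K ∣ k))
    (G : SimpleGraph V) :
    G.Colorable k ↔
      ∃ a : V → K, (∀ v, a v ^ k = 1) ∧
        ∀ u v : V, G.Adj u v →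
          ∑ r ∈ Finset.range k, a u ^ (k - 1 - r) * a v ^ r = 0 := by
  have hkK : (k : K) ≠ 0 := fun h => hchar ((ringChar.spec K k).mp h)
  have : NeZero ((k : K)) := ⟨hkK⟩
  constructor
  · rintro ⟨c⟩
    obtain ⟨ζ, hζ⟩ := HasEnoughRootsOfUnity.exists_primitiveRoot K k
    refine ⟨fun v => ζ ^ (c v : ℕ), fun v => by
      rw [← pow_mul, mul_comm, pow_mul, hζ.pow_eq_one, one_pow], ?_⟩
    intro u v huv
    set x := ζ ^ (c v : ℕ) with hx
    set y := ζ ^ (c u : ℕ) with hy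
    have hne : x ≠ y := by
      intro h
      exact c.valid huv (Fin.ext (hζ.pow_inj (c u).isLt (c v).isLt h.symm))
    have hxk : x ^ k = 1 := by
      rw [hx, ← pow_mul, mul_comm, pow_mul, hζ.pow_eq_one, one_pow]
    have hyk : y ^ k = 1 := by
      rw [hy, ← pow_mul, mul_comm, pow_mul, hζ.pow_eq_one, one_pow]
    have key := geom_sum₂_mul x y k
    rw [hxk, hyk, sub_self] at key
    have h0 : (∑ i ∈ Finset.range k, x ^ i * y ^ (k - 1 - i)) = 0 :=
      (mul_eq_zero.mp key).resolve_right (sub_ne_zero.mpr hne)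
    calc ∑ r ∈ Finset.range k, y ^ (k - 1 - r) * x ^ r
        = ∑ i ∈ Finset.range k, x ^ i * y ^ (k - 1 - i) :=
          Finset.sum_congr rfl (fun i _ => mul_comm _ _)
      _ = 0 := h0
  · rintro ⟨a, ha, hsum⟩
    have hne : ∀ u v, G.Adj u v → a u ≠ a v := by
      intro u v huv h
      have h0 : ∀ r ∈ Finset.range k, a u ^ (k - 1 - r) * a v ^ r = a u ^ (k - 1) := by
        intro r hr
        rw [← h, ← pow_add]
        congr 1
        have := Finset.mem_range.mp hr
        omega
      have := hsum u v huv
      rw [Finset.sum_congr rfl h0, Finset.sum_const, Finset.card_range,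
        nsmul_eq_mul] at this
      have hau : a u ≠ 0 := fun h0' => by
        have := ha u; rw [h0', zero_pow (by omega)] at this; exact zero_ne_one this
      exact (mul_ne_zero hkK (pow_ne_zero _ hau)) this
    classical
    let S : Finset K := (Polynomial.nthRoots k (1 : K)).toFinset
    have hmem : ∀ v, a v ∈ S := fun v => by
      simp only [S, Multiset.mem_toFinset, Polynomial.mem_nthRoots (by omega : 0 < k)]
      exact ha v
    have hcard : S.card ≤ k := le_trans (Multiset.toFinset_card_le _)
      (by simpa using Polynomial.card_nthRoots k (1 : K))
    have coloring : G.Coloring (↥S) :=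
      SimpleGraph.Coloring.mk (fun v => ⟨a v, hmem v⟩)
        (fun {u v} huv h => hne u v huv (congrArg Subtype.val h))
    exact (coloring.colorable).mono (by simpa using hcard)
end

section
/- Let k ≥ 1 be an integer and let G = (V,E) be a finite simple graph with girth g, equipped with a linear order on V such that every index-increasing path of G has length at most k. Let α : V → ℕ be a finitely supported function with total degree |α| := Σ_v α(v) satisfying |α| < g/(2k) − 1 (equivalently, 2k(|α| + 1) < g). Then the descendant graph of the monomial x^α is a forest (acyclic). -/
/-- A path of length `t` is encoded by its vertices `f 0, …, f t`. -/
def IndexIncreasingPath {V : Type*} [LinearOrder V] (G : SimpleGraph V)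
    (t : ℕ) (f : Fin (t + 1) → V) : Prop :=
  (∀ i : Fin t, G.Adj (f i.castSucc) (f i.succ)) ∧
  ∀ i j : Fin (t + 1), i < j → f i < f j

/-- Paths of length `0` are allowed, so every vertex is a descendant of itself. -/
def Descendant {V : Type*} [LinearOrder V] (G : SimpleGraph V) (u w : V) : Prop :=
  ∃ (t : ℕ) (f : Fin (t + 1) → V),
    IndexIncreasingPath G t f ∧ f 0 = u ∧ f (Fin.last t) = w

/-- The descendant graph of `x^α` is induced by `descVerts G (Function.support α)`. -/
def descVerts {V : Type*} [LinearOrder V] (G : SimpleGraph V) (S : Set V) : Set V :=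
  {w | ∃ u ∈ S, Descendant G u w}

/-!
Suppose the descendant graph of `x^α` contains a cycle `C`; its length is at least the girth,
so greater than `2k(|α| + 1)`. Since index-increasing paths have length at most `k`, walking
along `C` one meets a local minimum (a valley) at least every `2k` steps, so there are
`|α| + 1` valleys on an arc of length at most `2k|α|`. The support of `α` has at most `|α|`
elements, so two of these valleys `x` and `y` descend from a common `u` in the support, and the
index-increasing paths `u → x`, `u → y` give a walk `W` from `x` to `y` of length at most `2k`
whose vertices are all at most `max x y`. The arc of `C` between `x` and `y` leaves the larger
of them upwards, so it is a path not contained in `W`, and together they contain a cycle of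
length at most `2k|α| + 2k`, contradicting the girth bound.
-/

open SimpleGraph Walk Finset

lemma Nat.le_add_mul_sub_of_succ_le_add {p : ℕ → ℕ} {c : ℕ} (hp : ∀ i, p (i + 1) ≤ p i + c)
    {i j : ℕ} (hij : i ≤ j) : p j ≤ p i + c * (j - i) := by
  induction j, hij using Nat.le_induction with
  | base => simp
  | succ j hij ih =>
    rw [show j + 1 - i = j - i + 1 by omega, mul_add_one]
    linarith [hp j]

lemma Nat.exists_not_and_succ_of_not_of_le {P : ℕ → Prop} {d e : ℕ} (hde : d ≤ e) (hd : ¬ P d)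
    (he : P e) :
    ∃ i, d ≤ i ∧ i < e ∧ ¬ P i ∧ P (i + 1) := by
  induction e, hde using Nat.le_induction with
  | base => exact absurd he hd
  | succ e hde ih =>
    by_cases h : P e
    · obtain ⟨i, hdi, hie, hi, hi'⟩ := ih h
      exact ⟨i, hdi, by omega, hi, hi'⟩
    · exact ⟨e, hde, by omega, h, he⟩

lemma Finset.card_filter_ne_zero_le_sum {ι : Type*} (s : Finset ι) (f : ι → ℕ) :
    #{i ∈ s | f i ≠ 0} ≤ ∑ i ∈ s, f i :=
  calc #{i ∈ s | f i ≠ 0} = ∑ i ∈ s with f i ≠ 0, 1 := card_eq_sum_ones _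
    _ ≤ ∑ i ∈ s with f i ≠ 0, f i :=
      sum_le_sum fun _ hi => Nat.one_le_iff_ne_zero.mpr (mem_filter.mp hi).2
    _ = ∑ i ∈ s, f i := sum_filter_ne_zero s

namespace SimpleGraph

section Cycles

variable {V : Type*} {G : SimpleGraph V}

lemma Walk.adj_getVert_mod_length {u : V} (c : G.Walk u u) (hc : 0 < c.length) (i : ℕ) :
    G.Adj (c.getVert (i % c.length)) (c.getVert ((i + 1) % c.length)) := by
  have hlt := Nat.mod_lt i hc
  have hsucc : (i + 1) % c.length = (i % c.length + 1) % c.length := by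
    conv_lhs => rw [← Nat.mod_add_div i c.length, add_right_comm, Nat.add_mul_mod_self_left]
  rw [hsucc]
  have hadj := c.adj_getVert_succ hlt
  rcases Nat.lt_or_ge (i % c.length + 1) c.length with h | h
  · rwa [Nat.mod_eq_of_lt h]
  · have hL : i % c.length + 1 = c.length := by omega
    rw [hL, getVert_length] at hadj
    rwa [hL, Nat.mod_self, getVert_zero]

lemma Walk.IsCycle.exists_isPath_getVert {u : V} {c : G.Walk u u} (hc : c.IsCycle) {a b : ℕ}
    (hab : a ≤ b) (hb : b < c.length) :
    ∃ A : G.Walk (c.getVert a) (c.getVert b),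
      A.IsPath ∧ A.length = b - a ∧ ∀ m ≤ b - a, c.getVert (a + m) ∈ A.support := by
  refine ⟨((c.take b).drop a).copy (by rw [take_getVert, min_eq_right hab]) rfl,
    by simpa using (hc.isPath_take hb).drop a, by simp; omega, fun m hm => ?_⟩
  rw [support_copy, mem_support_iff_exists_getVert]
  exact ⟨m, by rw [drop_getVert, take_getVert, min_eq_right (by omega)], by simp; omega⟩

lemma egirth_le_length_add_length {u v : V} {p : G.Walk u v} (hp : p.IsPath) (q : G.Walk u v)
    (hpq : ¬ p.support ⊆ q.support) : G.egirth ≤ p.length + q.length := by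
  classical
  have hne : p ≠ q.bypass := by
    rintro rfl
    exact hpq q.support_bypass_subset_support
  obtain ⟨_, -, -, c, hc, hlen⟩ := hp.exists_isCycle_length_le_add_of_ne q.bypass_isPath hne
  calc G.egirth ≤ c.length := egirth_le_length hc
    _ ≤ (p.length + q.length : ℕ) := by
      exact_mod_cast hlen.trans (Nat.add_le_add_left q.length_bypass_le_length _)

end Cycles

end SimpleGraph

def IndexIncreasingPathsLengthLE {V : Type*} [LinearOrder V] (G : SimpleGraph V) (k : ℕ) :
    Prop :=
  ∀ (t : ℕ) (f : Fin (t + 1) → V), IndexIncreasingPath G t f → t ≤ k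

section IndexIncreasingPaths

variable {V : Type*} [LinearOrder V] {G : SimpleGraph V} {k : ℕ}

lemma IndexIncreasingPath.exists_walk {t : ℕ} {f : Fin (t + 1) → V}
    (hf : IndexIncreasingPath G t f) :
    ∃ p : G.Walk (f 0) (f (Fin.last t)), p.length = t ∧ ∀ v ∈ p.support, v ≤ f (Fin.last t) := by
  have hchain : (List.ofFn f).IsChain G.Adj :=
    List.isChain_ofFn.mpr fun i hi => hf.1 ⟨i, by omega⟩
  refine ⟨(Walk.ofSupport _ (by simp) hchain).copy (by rw [List.head_ofFn]; rfl)
    (by rw [List.getLast_ofFn]; rfl), by simp [length_ofSupport], fun v hv => ?_⟩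
  rw [support_copy, support_ofSupport, List.mem_ofFn] at hv
  obtain ⟨i, rfl⟩ := hv
  rcases (Fin.le_last i).lt_or_eq with h | h
  · exact (hf.2 _ _ h).le
  · rw [h]

lemma Descendant.exists_walk (hG : IndexIncreasingPathsLengthLE G k) {u w : V}
    (h : Descendant G u w) : ∃ p : G.Walk u w, p.length ≤ k ∧ ∀ v ∈ p.support, v ≤ w := by
  obtain ⟨t, f, hf, rfl, rfl⟩ := h
  obtain ⟨p, hlen, hle⟩ := hf.exists_walk
  exact ⟨p, hlen.trans_le (hG t f hf), hle⟩

lemma exists_walk_of_descendant_of_descendant (hG : IndexIncreasingPathsLengthLE G k)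
    {u x y : V} (hx : Descendant G u x) (hy : Descendant G u y) :
    ∃ W : G.Walk x y, W.length ≤ 2 * k ∧ ∀ v ∈ W.support, v ≤ max x y := by
  obtain ⟨p, hp, hpx⟩ := hx.exists_walk hG
  obtain ⟨q, hq, hqy⟩ := hy.exists_walk hG
  refine ⟨p.reverse.append q, by simp only [length_append, length_reverse]; omega, fun v hv => ?_⟩
  rw [mem_support_append_iff, support_reverse, List.mem_reverse] at hv
  rcases hv with hv | hv
  · exact le_max_of_le_left (hpx v hv)
  · exact le_max_of_le_right (hqy v hv)

end IndexIncreasingPaths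

namespace IndexIncreasingPathsLengthLE

variable {V : Type*} [LinearOrder V] {G : SimpleGraph V} {k : ℕ} {g : ℕ → V}

lemma exists_not_lt_succ (hG : IndexIncreasingPathsLengthLE G k)
    (hadj : ∀ i, G.Adj (g i) (g (i + 1))) (j : ℕ) :
    ∃ i, j ≤ i ∧ i ≤ j + k ∧ ¬ g i < g (i + 1) := by
  by_contra! h
  have hrun : IndexIncreasingPath G (k + 1) fun i => g (j + i) :=
    ⟨fun i => hadj _, Fin.strictMono_iff_lt_succ.mpr fun i => h (j + i) (by omega) (by omega)⟩
  have := hG _ _ hrun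
  omega

lemma exists_lt_succ (hG : IndexIncreasingPathsLengthLE G k)
    (hadj : ∀ i, G.Adj (g i) (g (i + 1))) (j : ℕ) :
    ∃ i, j ≤ i ∧ i ≤ j + k ∧ g i < g (i + 1) := by
  by_contra! h
  have hstep : ∀ i : Fin (k + 1),
      G.Adj (g (j + k + 1 - i)) (g (j + k + 1 - (i + 1))) ∧
        g (j + k + 1 - i) < g (j + k + 1 - (i + 1)) := by
    intro i
    rw [show j + k + 1 - i = j + k - i + 1 by omega, show j + k + 1 - (i + 1) = j + k - i by omega]
    exact ⟨(hadj _).symm, (h _ (by omega) (by omega)).lt_of_ne (hadj _).ne'⟩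
  have hrun : IndexIncreasingPath G (k + 1) fun i => g (j + k + 1 - i) :=
    ⟨fun i => (hstep i).1, Fin.strictMono_iff_lt_succ.mpr fun i => (hstep i).2⟩
  have := hG _ _ hrun
  omega

lemma exists_valley (hG : IndexIncreasingPathsLengthLE G k)
    (hadj : ∀ i, G.Adj (g i) (g (i + 1))) (j : ℕ) :
    ∃ i, j < i ∧ i ≤ j + 2 * k ∧ g i < g (i - 1) ∧ g i < g (i + 1) := by
  obtain ⟨d, hjd, hdk, hd⟩ := hG.exists_not_lt_succ hadj j
  obtain ⟨e, hde, hek, he⟩ := hG.exists_lt_succ hadj d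
  obtain ⟨i, hdi, hie, hi, hi'⟩ :=
    Nat.exists_not_and_succ_of_not_of_le (P := fun i => g i < g (i + 1)) hde hd he
  exact ⟨i + 1, by omega, by omega, (not_lt.mp hi).lt_of_ne (hadj i).ne', hi'⟩

lemma exists_valleys (hG : IndexIncreasingPathsLengthLE G k)
    (hadj : ∀ i, G.Adj (g i) (g (i + 1))) :
    ∃ p : ℕ → ℕ, p 0 ≤ 2 * k ∧ (∀ i, p i < p (i + 1) ∧ p (i + 1) ≤ p i + 2 * k) ∧
      ∀ i, g (p i) < g (p i - 1) ∧ g (p i) < g (p i + 1) := by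
  choose next hgt hle hdesc hasc using hG.exists_valley hadj
  refine ⟨fun i => next^[i + 1] 0, by simpa using hle 0, fun i => ?_, fun i => ?_⟩
  · simp only [Function.iterate_succ_apply']
    exact ⟨hgt _, hle _⟩
  · simp only [Function.iterate_succ_apply']
    exact ⟨hdesc _, hasc _⟩

end IndexIncreasingPathsLengthLE

namespace SimpleGraph

section Descendants

variable {V : Type*} [LinearOrder V] {G : SimpleGraph V} {k : ℕ}

lemma Walk.IsCycle.egirth_le_of_descendant_of_descendant (hG : IndexIncreasingPathsLengthLE G k)
    {v : V} {c : G.Walk v v} (hc : c.IsCycle) {a b : ℕ} (hab : a < b) (hb : b < c.length)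
    (ha : c.getVert a < c.getVert (a + 1)) (hb' : c.getVert b < c.getVert (b - 1)) {u : V}
    (hx : Descendant G u (c.getVert a)) (hy : Descendant G u (c.getVert b)) :
    G.egirth ≤ (b - a + 2 * k : ℕ) := by
  obtain ⟨A, hA, hAlen, hAsupp⟩ := hc.exists_isPath_getVert hab.le hb
  obtain ⟨W, hWlen, hW⟩ := exists_walk_of_descendant_of_descendant hG hx hy
  -- The neighbour on `A` of its larger endpoint lies above every vertex of `W`.
  have hAW : ¬ A.support ⊆ W.support := by
    intro hsub
    rcases le_total (c.getVert b) (c.getVert a) with h | h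
    · have := hW _ (hsub (hAsupp 1 (by omega)))
      rw [max_eq_left h] at this
      exact not_lt.mpr this ha
    · have := hW _ (hsub (hAsupp (b - 1 - a) (by omega)))
      rw [max_eq_right h, show a + (b - 1 - a) = b - 1 by omega] at this
      exact not_lt.mpr this hb'
  calc G.egirth ≤ A.length + W.length := egirth_le_length_add_length hA W hAW
    _ ≤ (b - a + 2 * k : ℕ) := by rw [hAlen]; exact_mod_cast Nat.add_le_add_left hWlen _

lemma Walk.IsCycle.egirth_le_of_support_subset_descVerts (hG : IndexIncreasingPathsLengthLE G k)
    {S : Finset V} {v : V} {c : G.Walk v v} (hc : c.IsCycle)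
    (hcS : ∀ w ∈ c.support, w ∈ descVerts G S) : G.egirth ≤ (2 * k * (#S + 1) : ℕ) := by
  by_contra! hlong
  have hL : 2 * k * (#S + 1) < c.length := by
    exact_mod_cast hlong.trans_le (egirth_le_length hc)
  obtain ⟨p, hp0, hstep, hvalley⟩ :=
    hG.exists_valleys (c.adj_getVert_mod_length (by omega))
  choose anc hancS hanc using fun i => hcS _ (c.getVert_mem_support (p i % c.length))
  obtain ⟨i, hi, j, hj, hij, heq⟩ :=
    exists_ne_map_eq_of_card_lt_of_maps_to (s := range (#S + 1)) (by simp) fun i _ => hancS i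
  wlog hlt : i < j generalizing i j
  · exact this j hj i hi hij.symm heq.symm (by omega)
  rw [mem_range] at hj
  have hgap : p j - p i ≤ 2 * k * #S := by
    have := Nat.le_add_mul_sub_of_succ_le_add (fun i => (hstep i).2) hlt.le
    have := Nat.mul_le_mul_left (2 * k) (show j - i ≤ #S by omega)
    omega
  have hpjL : p j < c.length := by
    have := Nat.le_add_mul_sub_of_succ_le_add (fun i => (hstep i).2) (Nat.zero_le j)
    have := Nat.mul_le_mul_left (2 * k) (show j - 0 ≤ #S by omega)
    rw [mul_add_one] at hL
    omega
  have hpi : p i < p j := strictMono_nat_of_lt_succ (fun i => (hstep i).1) hlt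
  have hmod : ∀ n < c.length, n % c.length = n := fun n => Nat.mod_eq_of_lt
  have hshort := hc.egirth_le_of_descendant_of_descendant hG hpi hpjL
    (by simpa only [hmod _ (hpi.trans hpjL), hmod (p i + 1) (by omega)] using (hvalley i).2)
    (by simpa only [hmod _ hpjL, hmod (p j - 1) (by omega)] using (hvalley j).1)
    (by simpa only [hmod _ (hpi.trans hpjL)] using hanc i)
    (by simpa only [hmod _ hpjL, heq] using hanc j)
  refine not_lt.mpr (hshort.trans ?_) hlong
  rw [mul_add_one]
  exact_mod_cast (by omega)

lemma isAcyclic_induce_descVerts (hG : IndexIncreasingPathsLengthLE G k) {S : Finset V}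
    (hS : (2 * k * (#S + 1) : ℕ) < G.egirth) : (G.induce (descVerts G S)).IsAcyclic := by
  intro v c hc
  let ι := Embedding.induce (G := G) (descVerts G S)
  refine not_le.mpr hS ((hc.map (f := ι.toHom) ι.injective)
    |>.egirth_le_of_support_subset_descVerts hG ?_)
  simp only [Walk.support_map, List.mem_map]
  rintro _ ⟨w, -, rfl⟩
  exact w.2

end Descendants

end SimpleGraph

theorem descendant_graph_isAcyclic_general
    {V : Type*} [Fintype V] [LinearOrder V]
    (k : ℕ) (G : SimpleGraph V)
    (hpaths : ∀ (t : ℕ) (f : Fin (t + 1) → V), IndexIncreasingPath G t f → t ≤ k)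
    (α : V → ℕ)
    (hα : ((2 * k * ((∑ v, α v) + 1) : ℕ) : ℕ∞) < G.egirth) :
    (G.induce (descVerts G (Function.support α))).IsAcyclic := by
  classical
  have hsupp : Function.support α = ↑({v | α v ≠ 0} : Finset V) := by ext; simp
  rw [hsupp]
  refine isAcyclic_induce_descVerts hpaths (hα.trans_le' ?_)
  exact_mod_cast Nat.mul_le_mul_left _ (Nat.succ_le_succ (card_filter_ne_zero_le_sum _ _))

/-- Let `G` be a finite simple graph with a linear order on its vertices such that every
index-increasing path has length at most `k` (with `k ≥ 1`). If `α : V → ℕ` has total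
degree `|α|` with `2k(|α| + 1) < girth G`, then the descendant graph of the monomial
`x^α` (the subgraph of `G` induced by the support of `α` and all descendants of the
support) is a forest. -/
theorem descendant_graph_isAcyclic
    {V : Type*} [Fintype V] [LinearOrder V]
    (k : ℕ) (hk : 1 ≤ k) (G : SimpleGraph V)
    (hpaths : ∀ (t : ℕ) (f : Fin (t + 1) → V), IndexIncreasingPath G t f → t ≤ k)
    (α : V → ℕ)
    (hα : ((2 * k * ((∑ v, α v) + 1) : ℕ) : ℕ∞) < G.egirth) :
    (G.induce (descVerts G (Function.support α))).IsAcyclic :=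
  descendant_graph_isAcyclic_general k G hpaths α hα
end

section
/- Let k ≥ 1 be an integer, K a field, and G = (V,E) a finite simple graph. Suppose a : V → K satisfies a_v^k = 1 for every v ∈ V and a_u ≠ a_v for every edge {u,v} ∈ E (i.e., a is a proper coloring of G by k-th roots of unity). Define λ_α := Π_{v∈V} a_v^{(α v).val} for each α : V → ZMod k. Then λ_0 = 1 and, for every α : V → ZMod k and every edge {u,v} ∈ E, Σ_{r ∈ ZMod k} λ_{α + r·(e_u − e_v) − e_v} = 0; in particular, G admits a dual Nullstellensatz certificate of every degree d. -/
/-- If `a : V → K` is a proper coloring of `G` by `k`-th roots of unity (`a_v^k = 1` for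
all `v`, and `a_u ≠ a_v` on edges), then `λ_α := Π_v a_v^{(α v).val}` satisfies
`λ_0 = 1` and, for every `α : V → ZMod k` and every edge `{u,v}`,
`Σ_{r ∈ ZMod k} λ_{α + r(e_u − e_v) − e_v} = 0`; in particular it is a dual
Nullstellensatz certificate of every degree `d`. -/
theorem coloring_gives_dual_certificate
    {V : Type*} [Fintype V] [DecidableEq V]
    (K : Type*) [Field K]
    (k : ℕ) (hk : 1 ≤ k)
    (G : SimpleGraph V) (a : V → K)
    (hroot : ∀ v, a v ^ k = 1)
    (hproper : ∀ u v : V, G.Adj u v → a u ≠ a v) :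
    (fun α : V → ZMod k => ∏ v, a v ^ (α v).val) 0 = 1 ∧
    (∀ (α : V → ZMod k) (u v : V), G.Adj u v →
      ∑ r ∈ Finset.range k,
        (fun α : V → ZMod k => ∏ v, a v ^ (α v).val)
          (α + (r : ZMod k) • (Pi.single u 1 - Pi.single v 1) - Pi.single v 1) = 0) ∧
    ∀ d : ℕ, IsDualCert K G k d (fun α : V → ZMod k => ∏ v, a v ^ (α v).val) := by
  haveI : NeZero k := ⟨by omega⟩
  set lam : (V → ZMod k) → K := fun α => ∏ v, a v ^ (α v).val with hlam_def
  -- pow only depends on exponent mod k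
  have hmod : ∀ b : K, b ^ k = 1 → ∀ n : ℕ, b ^ (n % k) = b ^ n := by
    intro b hb n
    conv_rhs => rw [← Nat.mod_add_div n k]
    rw [pow_add, pow_mul, hb, one_pow, mul_one]
  have hvalpow : ∀ b : K, b ^ k = 1 → ∀ n : ℕ, b ^ ((n : ZMod k)).val = b ^ n := by
    intro b hb n
    rw [ZMod.val_natCast, hmod b hb]
  have haddpow : ∀ b : K, b ^ k = 1 → ∀ x y : ZMod k,
      b ^ ((x + y).val) = b ^ x.val * b ^ y.val := by
    intro b hb x y
    rw [ZMod.val_add, hmod b hb, pow_add]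
  have hlam_add : ∀ α β : V → ZMod k, lam (α + β) = lam α * lam β := by
    intro α β
    rw [hlam_def, ← Finset.prod_mul_distrib]
    exact Finset.prod_congr rfl fun w _ => by
      rw [Pi.add_apply, haddpow (a w) (hroot w)]
  have hsingle : ∀ (c : ZMod k) (w : V),
      lam (c • (Pi.single w 1 : V → ZMod k)) = a w ^ c.val := by
    intro c w
    show (∏ v : V, a v ^ ((c • (Pi.single w 1 : V → ZMod k)) v).val) = a w ^ c.val
    rw [Finset.prod_eq_single w]
    · simp
    · intro b _ hb
      simp [Pi.single_apply, hb]
    · simp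
  have hlam0 : lam 0 = 1 := by simp [hlam_def]
  have key : ∀ (α : V → ZMod k) (u v : V), G.Adj u v →
      ∑ r ∈ Finset.range k,
        lam (α + (r : ZMod k) • (Pi.single u 1 - Pi.single v 1) - Pi.single v 1) = 0 := by
    intro α u v huv
    have havnz : a v ≠ 0 := by
      intro h
      have := hroot v
      rw [h, zero_pow (by omega)] at this
      exact zero_ne_one this
    set x : K := a u / a v with hx_def
    have hx1 : x ≠ 1 := fun h => hproper u v huv ((div_eq_one_iff_eq havnz).mp h)
    have hxk : x ^ k = 1 := by rw [hx_def, div_pow, hroot, hroot, div_one]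
    have hsum : ∑ r ∈ Finset.range k, x ^ r = 0 := by
      have h := geom_sum_mul x k
      rw [hxk, sub_self] at h
      exact (mul_eq_zero.mp h).resolve_right (sub_ne_zero.mpr hx1)
    have hterm : ∀ r ∈ Finset.range k,
        lam (α + (r : ZMod k) • (Pi.single u 1 - Pi.single v 1) - Pi.single v 1)
          = lam α * (a v)⁻¹ * x ^ r := by
      intro r hr
      have harg : α + (r : ZMod k) • (Pi.single u 1 - Pi.single v 1) - Pi.single v 1
          = α + ((r : ZMod k) • (Pi.single u 1 : V → ZMod k)
              + ((-(r : ZMod k) - 1) • (Pi.single v 1 : V → ZMod k))) := by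
        funext w
        simp only [Pi.add_apply, Pi.sub_apply, Pi.smul_apply, smul_eq_mul,
          Pi.single_apply]
        ring
      rw [harg, hlam_add, hlam_add, hsingle, hsingle]
      have hu : a u ^ ((r : ZMod k)).val = a u ^ r := hvalpow (a u) (hroot u) r
      have hv : a v ^ ((-(r : ZMod k) - 1)).val = (a v ^ (r + 1))⁻¹ := by
        have h0 : (-(r : ZMod k) - 1) + ((r + 1 : ℕ) : ZMod k) = 0 := by
          push_cast; ring
        have h := haddpow (a v) (hroot v) (-(r : ZMod k) - 1) ((r + 1 : ℕ) : ZMod k)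
        rw [h0, ZMod.val_zero, pow_zero, hvalpow (a v) (hroot v) (r + 1)] at h
        exact eq_inv_of_mul_eq_one_left h.symm
      rw [hu, hv, hx_def, div_pow, pow_succ, mul_inv, div_eq_mul_inv]
      ring
    rw [Finset.sum_congr rfl hterm, ← Finset.mul_sum, hsum, mul_zero]
  exact ⟨hlam0, key, fun d => ⟨hlam0, fun α _ u v h => key α u v h⟩⟩
end
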